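/- arXiv:2503.01472 — 2 statements merged into one kernel-verified Lean document; each statement's English description precedes it below -/
import Mathlib

section
/- Fix d, H ∈ ℕ+, a continuous strictly positive similarity function δ : ℝ^d × ℝ^d → ℝ, a continuous activation Act : ℝ → ℝ, and attention-layer parameters W_VO^h, W_K^h, W_Q^h ∈ ℝ^{d×d} (h = 1,…,H), W_1, W_2 ∈ ℝ^{d×d}, b_1, b_2 ∈ ℝ^d. Let Q* ∈ ℝ^{d×n*}, K*, V* ∈ ℝ^{d×m*} be fixed matrices and p : {1,…,m*} → (0,1] a probability vector (Σ_{v} p(v) = 1). Suppose for each n, m ∈ ℕ+ there are random matrices Q^(n) ∈ ℝ^{d×n}, K^(m), V^(m) ∈ ℝ^{d×m}, and for each j ∈ ℕ+ a {1,…,n*}-valued random variable j*, and for each i ∈ ℕ+ a {1,…,m*}-valued random variable i*, such that: (b) for each j, ‖Q_j^(n) − Q*_{j*}‖ → 0 in probability as n → ∞; (c) for each i, ‖K_i^(m) − K*_{i*}‖ → 0 and ‖V_i^(m) − V*_{i*}‖ → 0 in probability as m → ∞; (d) almost surely, whenever i* = i'* one has K_i^(m) = K_{i'}^(m) and V_i^(m)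 = V_{i'}^(m), and for each v ∈ {1,…,m*}, (1/m)·|{k ∈ {1,…,m} : k* = v}| → p(v) in probability as m → ∞. Let Q'^{(m,n)} be the output of the attention layer applied to (X_Q, X_K, X_V) = (Q^(n), K^(m), V^(m)), and let Q'* be the output of the reweighted attention layer with weights p applied to (Q*, K*, V*). Then for every fixed j ∈ ℕ+, ‖Q'^{(m,n)}_j − Q'*_{j*}‖ → 0 in probability as m, n → ∞ jointly. -/
open MeasureTheory Filter Finset
open scoped ENNReal

noncomputable section

/-- `X` converges to `Y` in probability (w.r.t. the measure `P`) along the filter `l`. -/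
def TendstoInProb {Ω : Type*} [MeasurableSpace Ω] (P : Measure Ω)
    {ι : Type*} (l : Filter ι) {E : Type*} [Dist E]
    (X : ι → Ω → E) (Y : Ω → E) : Prop :=
  ∀ ε : ℝ, 0 < ε → Tendsto (fun n => P {ω | ε < dist (X n ω) (Y ω)}) l (nhds 0)

/-- The output column of a (weighted) multi-head attention layer for the query token `q`:
with keys `Kc i`, values `Vc i` (`i` ranging over a finite index type) and weights `w i`,
the layer computes `Y = q + ∑_h W_VO^h V Sim^w(W_K^h K, W_Q^h q)` where
`Sim^w_{i}(K, q) = w i δ(K_i, q) / ∑_k w k δ(K_k, q)`, followed by the feed-forward part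
`Y + W₂ Act(W₁ Y + b₁) + b₂` with `Act` applied elementwise.  Taking `w ≡ 1` gives the
ordinary attention layer; taking `w = p` gives the reweighted layer. -/
def layerOut {d H : ℕ} {ι : Type*} [Fintype ι]
    (δ : (Fin d → ℝ) → (Fin d → ℝ) → ℝ) (Act : ℝ → ℝ)
    (WVO WK WQ : Fin H → Matrix (Fin d) (Fin d) ℝ)
    (W1 W2 : Matrix (Fin d) (Fin d) ℝ) (b1 b2 : Fin d → ℝ)
    (w : ι → ℝ) (Kc Vc : ι → Fin d → ℝ) (q : Fin d → ℝ) : Fin d → ℝ :=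
  let Y : Fin d → ℝ := q + ∑ h : Fin H, ∑ i : ι,
      ((w i * δ ((WK h).mulVec (Kc i)) ((WQ h).mulVec q)) /
        ∑ k : ι, w k * δ ((WK h).mulVec (Kc k)) ((WQ h).mulVec q)) • ((WVO h).mulVec (Vc i))
  Y + W2.mulVec (fun a => Act ((W1.mulVec Y + b1) a)) + b2

lemma sum_comp_count {mstar m : ℕ} {E : Type*} [AddCommMonoid E] [Module ℝ E]
    (ist : ℕ → Fin mstar) (f : Fin mstar → E) :
    ∑ k ∈ range m, f (ist k)
      = ∑ v : Fin mstar, (∑ k ∈ range m, if ist k = v then (1:ℝ) else 0) • f v := by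
  have h1 : ∀ k, f (ist k) = ∑ v : Fin mstar, if ist k = v then f v else 0 := by
    intro k; rw [Finset.sum_ite_eq (Finset.univ) (ist k) f]; simp
  calc ∑ k ∈ range m, f (ist k)
      = ∑ k ∈ range m, ∑ v : Fin mstar, if ist k = v then f v else 0 := by
        exact Finset.sum_congr rfl fun k _ => h1 k
    _ = ∑ v : Fin mstar, ∑ k ∈ range m, if ist k = v then f v else 0 := Finset.sum_comm
    _ = ∑ v : Fin mstar, (∑ k ∈ range m, if ist k = v then (1:ℝ) else 0) • f v := by
        refine Finset.sum_congr rfl fun v _ => ?_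
        rw [Finset.sum_smul]
        refine Finset.sum_congr rfl fun k _ => ?_
        split_ifs <;> simp

lemma layerOut_group {d H mstar : ℕ}
    (δ : (Fin d → ℝ) → (Fin d → ℝ) → ℝ) (hδ_pos : ∀ x y, 0 < δ x y) (Act : ℝ → ℝ)
    (WVO WK WQ : Fin H → Matrix (Fin d) (Fin d) ℝ)
    (W1 W2 : Matrix (Fin d) (Fin d) ℝ) (b1 b2 : Fin d → ℝ)
    (m : ℕ) (hm : 0 < m)
    (Kc Vc : ℕ → Fin d → ℝ) (ist : ℕ → Fin mstar) (r : Fin mstar → ℕ)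
    (hr : ∀ v, r v < m ∧ ist (r v) = v)
    (hconst : ∀ i i', i < m → i' < m → ist i = ist i' → Kc i = Kc i' ∧ Vc i = Vc i')
    (q : Fin d → ℝ) :
    layerOut δ Act WVO WK WQ W1 W2 b1 b2 (fun _ : Fin m => (1:ℝ))
        (fun i : Fin m => Kc i.val) (fun i : Fin m => Vc i.val) q
      = layerOut δ Act WVO WK WQ W1 W2 b1 b2
        (fun v => (∑ k ∈ range m, if ist k = v then (1:ℝ) else 0) / (m:ℝ))
        (fun v => Kc (r v)) (fun v => Vc (r v)) q := by
  have hY : (∑ h : Fin H, ∑ i : Fin m,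
      (((1:ℝ) * δ ((WK h).mulVec (Kc i.val)) ((WQ h).mulVec q)) /
        ∑ k : Fin m, (1:ℝ) * δ ((WK h).mulVec (Kc k.val)) ((WQ h).mulVec q)) •
          ((WVO h).mulVec (Vc i.val)))
      = ∑ h : Fin H, ∑ v : Fin mstar,
        ((((∑ k ∈ range m, if ist k = v then (1:ℝ) else 0) / (m:ℝ)) *
            δ ((WK h).mulVec (Kc (r v))) ((WQ h).mulVec q)) /
          ∑ u : Fin mstar, ((∑ k ∈ range m, if ist k = u then (1:ℝ) else 0) / (m:ℝ)) *
            δ ((WK h).mulVec (Kc (r u))) ((WQ h).mulVec q)) •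
          ((WVO h).mulVec (Vc (r v))) := by
    refine Finset.sum_congr rfl fun h _ => ?_
    set q' := (WQ h).mulVec q with hq'
    set dv : ℕ → ℝ := fun i => δ ((WK h).mulVec (Kc i)) q' with hdv
    set c : Fin mstar → ℝ := fun v => ∑ k ∈ range m, if ist k = v then (1:ℝ) else 0 with hc
    have hKc : ∀ i < m, Kc i = Kc (r (ist i)) :=
      fun i hi => ((hconst i (r (ist i)) hi (hr _).1 ((hr _).2).symm).1)
    have hVc : ∀ i < m, Vc i = Vc (r (ist i)) :=
      fun i hi => ((hconst i (r (ist i)) hi (hr _).1 ((hr _).2).symm).2)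
    have hD : (∑ k : Fin m, dv k.val) = ∑ v : Fin mstar, c v * dv (r v) := by
      rw [Fin.sum_univ_eq_sum_range (fun k => dv k)]
      calc ∑ k ∈ range m, dv k = ∑ k ∈ range m, dv (r (ist k)) := by
            refine Finset.sum_congr rfl fun k hk => ?_
            rw [hdv]; simp only []
            rw [hKc k (mem_range.mp hk)]
        _ = ∑ v : Fin mstar, c v • dv (r v) := sum_comp_count ist (fun v => dv (r v))
        _ = _ := by simp [smul_eq_mul]
    have hNum : (∑ i : Fin m, dv i.val • (WVO h).mulVec (Vc i.val))
        = ∑ v : Fin mstar, (c v * dv (r v)) • (WVO h).mulVec (Vc (r v)) := by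
      rw [Fin.sum_univ_eq_sum_range (fun k => dv k • (WVO h).mulVec (Vc k))]
      calc ∑ k ∈ range m, dv k • (WVO h).mulVec (Vc k)
          = ∑ k ∈ range m, dv (r (ist k)) • (WVO h).mulVec (Vc (r (ist k))) := by
            refine Finset.sum_congr rfl fun k hk => ?_
            rw [hdv]; simp only []
            rw [hKc k (mem_range.mp hk), hVc k (mem_range.mp hk)]
        _ = ∑ v : Fin mstar, c v • (dv (r v) • (WVO h).mulVec (Vc (r v))) :=
            sum_comp_count ist (fun v => dv (r v) • (WVO h).mulVec (Vc (r v)))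
        _ = _ := by
            refine Finset.sum_congr rfl fun v _ => ?_
            rw [smul_smul]
    have hm' : (m:ℝ) ≠ 0 := Nat.cast_ne_zero.mpr hm.ne'
    have hD' : (∑ u : Fin mstar, (c u / (m:ℝ)) * dv (r u))
        = (∑ k : Fin m, dv k.val) / (m:ℝ) := by
      rw [hD, Finset.sum_div]
      exact Finset.sum_congr rfl fun u _ => by ring
    have hDpos : (0:ℝ) < ∑ k : Fin m, dv k.val := by
      have : (Finset.univ : Finset (Fin m)).Nonempty := by
        simpa [Finset.univ_nonempty_iff] using Fin.pos_iff_nonempty.mp hm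
      exact Finset.sum_pos (fun k _ => hδ_pos _ _) this
    calc ∑ i : Fin m, (((1:ℝ) * dv i.val) / ∑ k : Fin m, (1:ℝ) * dv k.val) •
            (WVO h).mulVec (Vc i.val)
        = ∑ i : Fin m, ((∑ k : Fin m, dv k.val)⁻¹ * dv i.val) • (WVO h).mulVec (Vc i.val) := by
          refine Finset.sum_congr rfl fun i _ => ?_
          simp [div_eq_inv_mul, mul_comm]
      _ = (∑ k : Fin m, dv k.val)⁻¹ • ∑ i : Fin m, dv i.val • (WVO h).mulVec (Vc i.val) := by
          rw [Finset.smul_sum]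
          exact Finset.sum_congr rfl fun i _ => by rw [smul_smul]
      _ = (∑ k : Fin m, dv k.val)⁻¹ • ∑ v : Fin mstar, (c v * dv (r v)) •
            (WVO h).mulVec (Vc (r v)) := by rw [hNum]
      _ = ∑ v : Fin mstar, ((c v / (m:ℝ)) * dv (r v) /
            ∑ u : Fin mstar, (c u / (m:ℝ)) * dv (r u)) • (WVO h).mulVec (Vc (r v)) := by
          rw [Finset.smul_sum]
          refine Finset.sum_congr rfl fun v _ => ?_
          rw [smul_smul, hD']
          congr 1
          rw [div_div_eq_mul_div, div_mul_eq_mul_div, mul_comm]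
          rw [eq_div_iff (by positivity)]
          field_simp
  simp only [layerOut]
  rw [hY]

lemma layerOut_continuousAt {d H mstar : ℕ}
    (δ : (Fin d → ℝ) → (Fin d → ℝ) → ℝ)
    (hδ_cont : Continuous fun x : (Fin d → ℝ) × (Fin d → ℝ) => δ x.1 x.2)
    (Act : ℝ → ℝ) (hAct : Continuous Act)
    (WVO WK WQ : Fin H → Matrix (Fin d) (Fin d) ℝ)
    (W1 W2 : Matrix (Fin d) (Fin d) ℝ) (b1 b2 : Fin d → ℝ)
    (z₀ : (Fin mstar → ℝ) × (Fin mstar → Fin d → ℝ) × (Fin mstar → Fin d → ℝ) × (Fin d → ℝ))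
    (hden : ∀ h : Fin H,
      (∑ k : Fin mstar, z₀.1 k * δ ((WK h).mulVec (z₀.2.1 k)) ((WQ h).mulVec z₀.2.2.2)) ≠ 0) :
    ContinuousAt (fun z : (Fin mstar → ℝ) × (Fin mstar → Fin d → ℝ) ×
        (Fin mstar → Fin d → ℝ) × (Fin d → ℝ) =>
      layerOut δ Act WVO WK WQ W1 W2 b1 b2 z.1 z.2.1 z.2.2.1 z.2.2.2) z₀ := by
  have hproj_w : ∀ i : Fin mstar, Continuous fun z : (Fin mstar → ℝ) × (Fin mstar → Fin d → ℝ) ×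
      (Fin mstar → Fin d → ℝ) × (Fin d → ℝ) => z.1 i :=
    fun i => (continuous_apply i).comp continuous_fst
  have hproj_K : ∀ i : Fin mstar, Continuous fun z : (Fin mstar → ℝ) × (Fin mstar → Fin d → ℝ) ×
      (Fin mstar → Fin d → ℝ) × (Fin d → ℝ) => z.2.1 i :=
    fun i => (continuous_apply i).comp (continuous_fst.comp continuous_snd)
  have hproj_V : ∀ i : Fin mstar, Continuous fun z : (Fin mstar → ℝ) × (Fin mstar → Fin d → ℝ) ×
      (Fin mstar → Fin d → ℝ) × (Fin d → ℝ) => z.2.2.1 i :=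
    fun i => (continuous_apply i).comp
      (continuous_fst.comp (continuous_snd.comp continuous_snd))
  have hproj_q : Continuous fun z : (Fin mstar → ℝ) × (Fin mstar → Fin d → ℝ) ×
      (Fin mstar → Fin d → ℝ) × (Fin d → ℝ) => z.2.2.2 :=
    continuous_snd.comp (continuous_snd.comp continuous_snd)
  have hδc : ∀ (h : Fin H) (i : Fin mstar), Continuous fun z : (Fin mstar → ℝ) ×
      (Fin mstar → Fin d → ℝ) × (Fin mstar → Fin d → ℝ) × (Fin d → ℝ) =>
      δ ((WK h).mulVec (z.2.1 i)) ((WQ h).mulVec z.2.2.2) := by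
    intro h i
    exact hδ_cont.comp ((continuous_const.matrix_mulVec (hproj_K i)).prodMk
      (continuous_const.matrix_mulVec hproj_q))
  have hnum : ∀ (h : Fin H) (i : Fin mstar), Continuous fun z : (Fin mstar → ℝ) ×
      (Fin mstar → Fin d → ℝ) × (Fin mstar → Fin d → ℝ) × (Fin d → ℝ) =>
      z.1 i * δ ((WK h).mulVec (z.2.1 i)) ((WQ h).mulVec z.2.2.2) :=
    fun h i => (hproj_w i).mul (hδc h i)
  have hdenc : ∀ h : Fin H, Continuous fun z : (Fin mstar → ℝ) ×
      (Fin mstar → Fin d → ℝ) × (Fin mstar → Fin d → ℝ) × (Fin d → ℝ) =>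
      ∑ k : Fin mstar, z.1 k * δ ((WK h).mulVec (z.2.1 k)) ((WQ h).mulVec z.2.2.2) :=
    fun h => continuous_finset_sum _ fun k _ => hnum h k
  have hYc : ContinuousAt (fun z : (Fin mstar → ℝ) × (Fin mstar → Fin d → ℝ) ×
      (Fin mstar → Fin d → ℝ) × (Fin d → ℝ) =>
      z.2.2.2 + ∑ h : Fin H, ∑ i : Fin mstar,
        ((z.1 i * δ ((WK h).mulVec (z.2.1 i)) ((WQ h).mulVec z.2.2.2)) /
          ∑ k : Fin mstar, z.1 k * δ ((WK h).mulVec (z.2.1 k)) ((WQ h).mulVec z.2.2.2)) •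
          ((WVO h).mulVec (z.2.2.1 i))) z₀ := by
    refine hproj_q.continuousAt.add ?_
    refine tendsto_finset_sum _ fun h _ => ?_
    refine tendsto_finset_sum _ fun i _ => ?_
    exact (((hnum h i).continuousAt.div (hdenc h).continuousAt (hden h)).smul
      (continuous_const.matrix_mulVec (hproj_V i)).continuousAt)
  have houter : Continuous fun Y : Fin d → ℝ =>
      Y + W2.mulVec (fun a => Act ((W1.mulVec Y + b1) a)) + b2 := by
    refine (continuous_id.add ?_).add continuous_const
    refine Continuous.matrix_mulVec continuous_const ?_
    refine continuous_pi fun a => ?_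
    exact hAct.comp ((continuous_apply a).comp
      ((continuous_const.matrix_mulVec continuous_id).add continuous_const))
  simp only [layerOut]
  exact (houter.continuousAt).comp hYc


/-- asymptotic equivalence of an attention layer and its reweighted version.
Growing random matrices are modelled by their columns: `Q n ω j` is the `j`-th column of
`Q^(n)` (relevant for `j < n`), and similarly for `K`, `V`; fixed matrices are given by
their columns `Qstar`, `Kstar`, `Vstar`.  The random correspondence indices are
`jstar j : Ω → Fin nstar` and `istar i : Ω → Fin mstar`. -/
theorem reweighted_attention_layer_asymptotic
    {Ω : Type*} [MeasurableSpace Ω] (P : Measure Ω) [IsProbabilityMeasure P]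
    (d H nstar mstar : ℕ) (hd : 0 < d) (hH : 0 < H)
    (hnstar : 0 < nstar) (hmstar : 0 < mstar)
    (δ : (Fin d → ℝ) → (Fin d → ℝ) → ℝ)
    (hδ_cont : Continuous fun x : (Fin d → ℝ) × (Fin d → ℝ) => δ x.1 x.2)
    (hδ_pos : ∀ x y, 0 < δ x y)
    (Act : ℝ → ℝ) (hAct : Continuous Act)
    (WVO WK WQ : Fin H → Matrix (Fin d) (Fin d) ℝ)
    (W1 W2 : Matrix (Fin d) (Fin d) ℝ) (b1 b2 : Fin d → ℝ)
    (Qstar : Fin nstar → Fin d → ℝ) (Kstar Vstar : Fin mstar → Fin d → ℝ)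
    (p : Fin mstar → ℝ) (hp_pos : ∀ v, 0 < p v) (hp_le : ∀ v, p v ≤ 1)
    (hp_sum : ∑ v, p v = 1)
    (Q : ℕ → Ω → ℕ → Fin d → ℝ) (K V : ℕ → Ω → ℕ → Fin d → ℝ)
    (jstar : ℕ → Ω → Fin nstar) (istar : ℕ → Ω → Fin mstar)
    (hjstar_meas : ∀ j, Measurable (jstar j)) (histar_meas : ∀ i, Measurable (istar i))
    -- (b) each query column converges in probability to the corresponding fixed column
    (hQ : ∀ j : ℕ,
      TendstoInProb P (atTop : Filter ℕ) (fun n ω => Q n ω j) (fun ω => Qstar (jstar j ω)))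
    -- (c) key and value columns converge synchronously
    (hK : ∀ i : ℕ,
      TendstoInProb P (atTop : Filter ℕ) (fun m ω => K m ω i) (fun ω => Kstar (istar i ω)))
    (hV : ∀ i : ℕ,
      TendstoInProb P (atTop : Filter ℕ) (fun m ω => V m ω i) (fun ω => Vstar (istar i ω)))
    -- (d) group constancy and convergence of group frequencies to the probabilities
    (h_grp : ∀ m : ℕ, ∀ᵐ ω ∂P, ∀ i i' : ℕ, i < m → i' < m → istar i ω = istar i' ω →
      K m ω i = K m ω i' ∧ V m ω i = V m ω i')
    (h_card : ∀ v : Fin mstar,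
      TendstoInProb P (atTop : Filter ℕ)
        (fun m ω => (∑ k ∈ Finset.range m, if istar k ω = v then (1 : ℝ) else 0) / (m : ℝ))
        (fun _ => p v)) :
    ∀ j : ℕ,
      TendstoInProb P (atTop : Filter (ℕ × ℕ))
        (fun mn ω =>
          layerOut δ Act WVO WK WQ W1 W2 b1 b2 (fun _ : Fin mn.1 => (1 : ℝ))
            (fun i : Fin mn.1 => K mn.1 ω i.val) (fun i : Fin mn.1 => V mn.1 ω i.val)
            (Q mn.2 ω j))
        (fun ω =>
          layerOut δ Act WVO WK WQ W1 W2 b1 b2 p Kstar Vstar (Qstar (jstar j ω))) := by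
  intro j ε hε
  have hmne : Nonempty (Fin mstar) := Fin.pos_iff_nonempty.mp hmstar
  have hnne : Nonempty (Fin nstar) := Fin.pos_iff_nonempty.mp hnstar
  -- the continuous map g and its modulus of continuity at the limit points
  set S := ((Fin mstar → ℝ) × (Fin mstar → Fin d → ℝ) × (Fin mstar → Fin d → ℝ) × (Fin d → ℝ))
    with hS
  set g : S → (Fin d → ℝ) :=
    fun z => layerOut δ Act WVO WK WQ W1 W2 b1 b2 z.1 z.2.1 z.2.2.1 z.2.2.2 with hg_def
  set zs : Fin nstar → S := fun j0 => (p, Kstar, Vstar, Qstar j0) with hzs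
  have hg : ∀ j0 : Fin nstar, ContinuousAt g (zs j0) := by
    intro j0
    refine layerOut_continuousAt δ hδ_cont Act hAct WVO WK WQ W1 W2 b1 b2 (zs j0) ?_
    intro h
    exact ne_of_gt (Finset.sum_pos
      (fun k _ => mul_pos (hp_pos k) (hδ_pos _ _)) Finset.univ_nonempty)
  choose ρf hρfpos hρf using fun j0 : Fin nstar => Metric.continuousAt_iff.1 (hg j0) ε hε
  set ρ : ℝ := Finset.univ.inf' Finset.univ_nonempty ρf with hρ_def
  have hρpos : 0 < ρ := by
    rw [hρ_def, Finset.lt_inf'_iff]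
    exact fun j0 _ => hρfpos j0
  rw [ENNReal.tendsto_nhds_zero]
  intro η hη
  set η6 : ℝ≥0∞ := η / 6 with hη6_def
  have hη6 : 0 < η6 := ENNReal.div_pos hη.ne' (by norm_num)
  have hη6m : (0:ℝ≥0∞) < η6 / mstar :=
    ENNReal.div_pos hη6.ne' (ENNReal.natCast_ne_top mstar)
  -- choose N so that with probability ≥ 1 - η6 every group is represented below N
  choose Nv hNv using fun v : Fin mstar =>
    Filter.eventually_atTop.1
      (ENNReal.tendsto_nhds_zero.1 (h_card v (p v / 2) (half_pos (hp_pos v))) (η6 / mstar) hη6m)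
  set N : ℕ := (Finset.univ.sup Nv) + 1 with hN_def
  have hNpos : 0 < N := Nat.succ_pos _
  set A : Set Ω := {ω | ∀ v : Fin mstar, ∃ k, k < N ∧ istar k ω = v} with hA_def
  have hAc : P Aᶜ ≤ η6 := by
    have hsub : Aᶜ ⊆ ⋃ v ∈ (Finset.univ : Finset (Fin mstar)),
        {ω | p v / 2 < dist ((∑ k ∈ Finset.range (Nv v),
          if istar k ω = v then (1:ℝ) else 0) / ((Nv v : ℕ) : ℝ)) (p v)} := by
      intro ω hω
      simp only [hA_def, Set.mem_compl_iff, Set.mem_setOf_eq, not_forall] at hω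
      obtain ⟨v, hv⟩ := hω
      push_neg at hv
      have hzero : (∑ k ∈ Finset.range (Nv v), if istar k ω = v then (1:ℝ) else 0) = 0 := by
        refine Finset.sum_eq_zero fun k hk => ?_
        have hkN : k < N := lt_of_lt_of_le (Finset.mem_range.mp hk)
          (le_trans (Finset.le_sup (Finset.mem_univ v)) (Nat.le_succ _))
        simp [hv k hkN]
      refine Set.mem_biUnion (Finset.mem_univ v) ?_
      simp only [Set.mem_setOf_eq, hzero, zero_div, Real.dist_eq, zero_sub, abs_neg,
        abs_of_pos (hp_pos v)]
      exact half_lt_self (hp_pos v)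
    refine le_trans (measure_mono hsub) ?_
    refine le_trans (measure_biUnion_finset_le _ _) ?_
    refine le_trans (Finset.sum_le_sum fun v _ => hNv v (Nv v) le_rfl) ?_
    rw [Finset.sum_const, Finset.card_univ, Fintype.card_fin, nsmul_eq_mul]
    exact ENNReal.mul_div_le
  -- eventual bounds for the other ingredients
  have hη6N : (0:ℝ≥0∞) < η6 / N := ENNReal.div_pos hη6.ne' (ENNReal.natCast_ne_top N)
  choose fK hfK using fun k : ℕ =>
    Filter.eventually_atTop.1
      (ENNReal.tendsto_nhds_zero.1 (hK k (ρ / 2) (half_pos hρpos)) (η6 / N) hη6N)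
  choose fV hfV using fun k : ℕ =>
    Filter.eventually_atTop.1
      (ENNReal.tendsto_nhds_zero.1 (hV k (ρ / 2) (half_pos hρpos)) (η6 / N) hη6N)
  choose fF hfF using fun v : Fin mstar =>
    Filter.eventually_atTop.1
      (ENNReal.tendsto_nhds_zero.1 (h_card v (ρ / 2) (half_pos hρpos)) (η6 / mstar) hη6m)
  obtain ⟨MQ, hMQ⟩ := Filter.eventually_atTop.1
    (ENNReal.tendsto_nhds_zero.1 (hQ j (ρ / 2) (half_pos hρpos)) η6 hη6)
  set MK : ℕ := (Finset.range N).sup fK with hMK_def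
  set MV : ℕ := (Finset.range N).sup fV with hMV_def
  set MF : ℕ := Finset.univ.sup fF with hMF_def
  rw [Filter.eventually_atTop]
  refine ⟨(max N (max MK (max MV MF)), MQ), ?_⟩
  rintro ⟨m, n⟩ hmn
  have hmN : N ≤ m := le_trans (le_max_left _ _) hmn.1
  have hmK : MK ≤ m := le_trans (le_trans (le_max_left _ _) (le_max_right N _)) hmn.1
  have hmV : MV ≤ m := le_trans (le_trans (le_trans (le_max_left _ _) (le_max_right MK _))
    (le_max_right N _)) hmn.1
  have hmF : MF ≤ m := le_trans (le_trans (le_trans (le_max_right MV _) (le_max_right MK _))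
    (le_max_right N _)) hmn.1
  have hnQ : MQ ≤ n := hmn.2
  have hm : 0 < m := lt_of_lt_of_le hNpos hmN
  -- the six bad events
  set C : Set Ω := {ω | ∀ i i' : ℕ, i < m → i' < m → istar i ω = istar i' ω →
    K m ω i = K m ω i' ∧ V m ω i = V m ω i'} with hC_def
  have hCc : P Cᶜ = 0 := by
    have := h_grp m
    rw [MeasureTheory.ae_iff] at this
    exact this
  set S3 : Set Ω := ⋃ v ∈ (Finset.univ : Finset (Fin mstar)),
    {ω | ρ / 2 < dist ((∑ k ∈ Finset.range m, if istar k ω = v then (1:ℝ) else 0) / (m : ℝ))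
      (p v)} with hS3_def
  set S4 : Set Ω := ⋃ k ∈ Finset.range N,
    {ω | ρ / 2 < dist (K m ω k) (Kstar (istar k ω))} with hS4_def
  set S5 : Set Ω := ⋃ k ∈ Finset.range N,
    {ω | ρ / 2 < dist (V m ω k) (Vstar (istar k ω))} with hS5_def
  set S6 : Set Ω := {ω | ρ / 2 < dist (Q n ω j) (Qstar (jstar j ω))} with hS6_def
  have hS3le : P S3 ≤ η6 := by
    refine le_trans (measure_biUnion_finset_le _ _) ?_
    refine le_trans (Finset.sum_le_sum fun v _ => hfF v m
      (le_trans (Finset.le_sup (Finset.mem_univ v)) hmF)) ?_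
    rw [Finset.sum_const, Finset.card_univ, Fintype.card_fin, nsmul_eq_mul]
    exact ENNReal.mul_div_le
  have hS4le : P S4 ≤ η6 := by
    refine le_trans (measure_biUnion_finset_le _ _) ?_
    refine le_trans (Finset.sum_le_sum fun k hk => hfK k m
      (le_trans (Finset.le_sup hk) hmK)) ?_
    rw [Finset.sum_const, Finset.card_range, nsmul_eq_mul]
    exact ENNReal.mul_div_le
  have hS5le : P S5 ≤ η6 := by
    refine le_trans (measure_biUnion_finset_le _ _) ?_
    refine le_trans (Finset.sum_le_sum fun k hk => hfV k m
      (le_trans (Finset.le_sup hk) hmV)) ?_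
    rw [Finset.sum_const, Finset.card_range, nsmul_eq_mul]
    exact ENNReal.mul_div_le
  have hS6le : P S6 ≤ η6 := hMQ n hnQ
  -- the inclusion
  have hsub : {ω | ε < dist
      (layerOut δ Act WVO WK WQ W1 W2 b1 b2 (fun _ : Fin m => (1:ℝ))
        (fun i : Fin m => K m ω i.val) (fun i : Fin m => V m ω i.val) (Q n ω j))
      (layerOut δ Act WVO WK WQ W1 W2 b1 b2 p Kstar Vstar (Qstar (jstar j ω)))}
      ⊆ Aᶜ ∪ (Cᶜ ∪ (S3 ∪ (S4 ∪ (S5 ∪ S6)))) := by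
    intro ω hω
    by_contra hu
    simp only [Set.mem_union, not_or] at hu
    obtain ⟨h1, h2, h3, h4, h5, h6⟩ := hu
    have hAmem : ∀ v : Fin mstar, ∃ k, k < N ∧ istar k ω = v := Set.not_notMem.mp h1
    have hCmem : ∀ i i' : ℕ, i < m → i' < m → istar i ω = istar i' ω →
        K m ω i = K m ω i' ∧ V m ω i = V m ω i' := Set.not_notMem.mp h2
    simp only [hS3_def, hS4_def, hS5_def, Set.mem_iUnion, not_exists,
      Set.mem_setOf_eq, exists_prop] at h3 h4 h5
    have h6' : ¬ (ρ / 2 < dist (Q n ω j) (Qstar (jstar j ω))) := h6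
    -- representatives
    set kv : Fin mstar → ℕ := fun v => sInf {k | istar k ω = v} with hkv_def
    have hrep : ∀ v : Fin mstar, kv v < N ∧ istar (kv v) ω = v := by
      intro v
      obtain ⟨k, hkN, hk⟩ := hAmem v
      have hne : {k | istar k ω = v}.Nonempty := ⟨k, hk⟩
      exact ⟨lt_of_le_of_lt (Nat.sInf_le hk) hkN, Nat.sInf_mem hne⟩
    -- the grouped equality
    set Zω : S := (fun v => (∑ k ∈ Finset.range m, if istar k ω = v then (1:ℝ) else 0) / (m:ℝ),
      fun v => K m ω (kv v), fun v => V m ω (kv v), Q n ω j) with hZ_def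
    have hout_eq : layerOut δ Act WVO WK WQ W1 W2 b1 b2 (fun _ : Fin m => (1:ℝ))
        (fun i : Fin m => K m ω i.val) (fun i : Fin m => V m ω i.val) (Q n ω j) = g Zω := by
      exact layerOut_group δ hδ_pos Act WVO WK WQ W1 W2 b1 b2 m hm
        (fun i => K m ω i) (fun i => V m ω i) (fun k => istar k ω) kv
        (fun v => ⟨lt_of_lt_of_le (hrep v).1 hmN, (hrep v).2⟩) hCmem (Q n ω j)
    -- distance bound
    set j0 : Fin nstar := jstar j ω with hj0_def
    have hd1 : dist Zω.1 (zs j0).1 ≤ ρ / 2 := by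
      refine (dist_pi_le_iff (half_pos hρpos).le).2 fun v => ?_
      exact le_of_not_gt fun hlt => h3 v ⟨Finset.mem_univ v, hlt⟩
    have hd2 : dist Zω.2.1 (zs j0).2.1 ≤ ρ / 2 := by
      refine (dist_pi_le_iff (half_pos hρpos).le).2 fun v => ?_
      have hk4 : ¬ (ρ / 2 < dist (K m ω (kv v)) (Kstar (istar (kv v) ω))) :=
        fun hlt => h4 (kv v) ⟨Finset.mem_range.mpr (hrep v).1, hlt⟩
      rw [(hrep v).2] at hk4
      exact le_of_not_gt hk4
    have hd3 : dist Zω.2.2.1 (zs j0).2.2.1 ≤ ρ / 2 := by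
      refine (dist_pi_le_iff (half_pos hρpos).le).2 fun v => ?_
      have hk5 : ¬ (ρ / 2 < dist (V m ω (kv v)) (Vstar (istar (kv v) ω))) :=
        fun hlt => h5 (kv v) ⟨Finset.mem_range.mpr (hrep v).1, hlt⟩
      rw [(hrep v).2] at hk5
      exact le_of_not_gt hk5
    have hd4 : dist Zω.2.2.2 (zs j0).2.2.2 ≤ ρ / 2 := le_of_not_gt h6'
    have hdist : dist Zω (zs j0) < ρf j0 := by
      have hle : dist Zω (zs j0) ≤ ρ / 2 := by
        rw [Prod.dist_eq]
        refine max_le hd1 ?_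
        rw [Prod.dist_eq]
        refine max_le hd2 ?_
        rw [Prod.dist_eq]
        exact max_le hd3 hd4
      calc dist Zω (zs j0) ≤ ρ / 2 := hle
        _ < ρ := half_lt_self hρpos
        _ ≤ ρf j0 := Finset.inf'_le ρf (Finset.mem_univ j0)
    have hgdist : dist (g Zω) (g (zs j0)) < ε := hρf j0 hdist
    have : dist (layerOut δ Act WVO WK WQ W1 W2 b1 b2 (fun _ : Fin m => (1:ℝ))
        (fun i : Fin m => K m ω i.val) (fun i : Fin m => V m ω i.val) (Q n ω j))
        (layerOut δ Act WVO WK WQ W1 W2 b1 b2 p Kstar Vstar (Qstar (jstar j ω))) < ε := by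
      rw [hout_eq]
      exact hgdist
    exact absurd hω (not_lt.mpr this.le)
  -- put everything together
  have hPbound : P {ω | ε < dist
      (layerOut δ Act WVO WK WQ W1 W2 b1 b2 (fun _ : Fin m => (1:ℝ))
        (fun i : Fin m => K m ω i.val) (fun i : Fin m => V m ω i.val) (Q n ω j))
      (layerOut δ Act WVO WK WQ W1 W2 b1 b2 p Kstar Vstar (Qstar (jstar j ω)))}
      ≤ η6 + (0 + (η6 + (η6 + (η6 + η6)))) := by
    refine le_trans (measure_mono hsub) ?_
    refine le_trans (measure_union_le _ _) (add_le_add hAc ?_)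
    refine le_trans (measure_union_le _ _) (add_le_add hCc.le ?_)
    refine le_trans (measure_union_le _ _) (add_le_add hS3le ?_)
    refine le_trans (measure_union_le _ _) (add_le_add hS4le ?_)
    exact le_trans (measure_union_le _ _) (add_le_add hS5le hS6le)
  refine le_trans hPbound ?_
  have h6eta : η6 + (0 + (η6 + (η6 + (η6 + η6)))) ≤ 6 * η6 := by
    have : η6 + (0 + (η6 + (η6 + (η6 + η6)))) = 5 * η6 := by ring
    rw [this]
    exact mul_le_mul_left (by norm_num) η6
  refine le_trans h6eta ?_
  rw [hη6_def]
  exact ENNReal.mul_div_le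


end
end

section
/- Let F_A* be an ordered set of n_A* feature points (pairs of a coordinate in ℝ² and a descriptor in ℝ^d) and F_B* an ordered set of n_B* feature points, with probability vectors p_A on {1,…,n_A*} and p_B on {1,…,n_B*} having strictly positive entries. Let (ι_k)_{k≥1} and (κ_l)_{l≥1} be independent i.i.d. sequences with laws p_A and p_B respectively, and for sample sizes n_A, n_B set F_A = (F*_{A,ι_1},…,F*_{A,ι_{n_A}}) and F_B = (F*_{B,κ_1},…,F*_{B,κ_{n_B}}). Let TF be any matching Transformer (a pointwise embedding layer followed by finitely many attention layers, each with its own parameters, continuous strictly positive similarity function, and continuous activation, each updating one token stream with keys/values taken from either stream), and let TF^{p_A,p_B} be its reweighted version. Denote by F'_{A,i} and F'_{B,j} the i-th and j-th output feature points of TF(F_A, F_B), and by F*'_{A,i*} and F*'_{B,j*} those of TF^{p_A,p_B}(F_A*, F_B*). Then for all fixed indices i, j ∈ ℕ+, as n_A, n_B → ∞ jointly, ‖F'_{A,i} − F*'_{A,ι_i}‖ → 0 and ‖F'_{B,j} − F*'_{B,κ_j}‖ → 0 in probability. -/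
/-!
Attention sees its keys only through the weighted empirical measure they define: a key repeated
`c` times acts like a single key of weight `c`, and rescaling all weights changes nothing. Hence
`TF` on the sample `F*_{A,ι_1}, …, F*_{A,ι_{n_A}}` coincides, along the sample, with the
reweighted Transformer on the whole population weighted by the empirical frequencies of the `ι_k`
(and likewise for `B`). The reweighted Transformer depends continuously on the weights near the
strictly positive `p_A, p_B`, and by the law of large numbers the empirical frequencies converge
in probability to `p_A, p_B`; the continuous mapping theorem concludes.
-/

open MeasureTheory Filter Finset ProbabilityTheory

noncomputable section

/-- An attention layer of a matching Transformer: its own number of heads, a continuous,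
strictly positive similarity function, a continuous activation, head and feed-forward
parameters, and design choices of which token stream it updates (`updatesA`) and from which
stream the keys/values are taken (`srcA`). -/
structure AttnLayer (d : ℕ) where
  H : ℕ
  delta : (Fin d → ℝ) → (Fin d → ℝ) → ℝ
  delta_cont : Continuous fun x : (Fin d → ℝ) × (Fin d → ℝ) => delta x.1 x.2
  delta_pos : ∀ x y, 0 < delta x y
  act : ℝ → ℝ
  act_cont : Continuous act
  WVO : Fin H → Matrix (Fin d) (Fin d) ℝ
  WK : Fin H → Matrix (Fin d) (Fin d) ℝ
  WQ : Fin H → Matrix (Fin d) (Fin d) ℝ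
  W1 : Matrix (Fin d) (Fin d) ℝ
  W2 : Matrix (Fin d) (Fin d) ℝ
  b1 : Fin d → ℝ
  b2 : Fin d → ℝ
  updatesA : Bool
  srcA : Bool

/-- The update of a single query token `q` by the (weighted) attention layer `L`, with keys
and values `XK i` (`i < nK`) carrying weights `w i`:
`Y = q + ∑_h W_VO^h XK Sim^w(W_K^h XK, W_Q^h q)` followed by the feed-forward part
`Y + W₂ Act(W₁ Y + b₁) + b₂`, where
`Sim^w_i = w i δ(W_K^h XK_i, W_Q^h q) / ∑_{k<nK} w k δ(W_K^h XK_k, W_Q^h q)`.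
Taking `w ≡ 1` yields the ordinary attention update. -/
def attnUpdate {d : ℕ} (L : AttnLayer d) (nK : ℕ) (w : ℕ → ℝ)
    (XK : ℕ → Fin d → ℝ) (q : Fin d → ℝ) : Fin d → ℝ :=
  let Y : Fin d → ℝ := q + ∑ h : Fin L.H, ∑ i ∈ Finset.range nK,
      ((w i * L.delta ((L.WK h).mulVec (XK i)) ((L.WQ h).mulVec q)) /
        ∑ k ∈ Finset.range nK, w k * L.delta ((L.WK h).mulVec (XK k)) ((L.WQ h).mulVec q)) •
        ((L.WVO h).mulVec (XK i))
  Y + (L.W2).mulVec (fun a => L.act (((L.W1).mulVec Y + L.b1) a)) + L.b2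

/-- Application of one attention layer to the pair of token streams `(X_A, X_B)` (each
modelled as a function `ℕ → Fin d → ℝ`, with `nA` resp. `nB` relevant tokens and with
weights `wA` resp. `wB`): the layer updates one stream, with keys/values taken from the
stream selected by `srcA`. -/
def applyLayer {d : ℕ} (L : AttnLayer d) (nA nB : ℕ) (wA wB : ℕ → ℝ)
    (X : (ℕ → Fin d → ℝ) × (ℕ → Fin d → ℝ)) : (ℕ → Fin d → ℝ) × (ℕ → Fin d → ℝ) :=
  let nK : ℕ := if L.srcA then nA else nB
  let w : ℕ → ℝ := if L.srcA then wA else wB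
  let XK : ℕ → Fin d → ℝ := if L.srcA then X.1 else X.2
  if L.updatesA then (fun j => attnUpdate L nK w XK (X.1 j), X.2)
  else (X.1, fun j => attnUpdate L nK w XK (X.2 j))

/-- A matching Transformer: a pointwise embedding layer mapping a feature point
(coordinate in ℝ², descriptor in ℝ^d) to a token, followed by finitely many attention
layers. -/
structure MatchingTF (d : ℕ) where
  emb : (Fin 2 → ℝ) → (Fin d → ℝ) → Fin d → ℝ
  layers : List (AttnLayer d)

/-- Running the (weighted) Transformer on the feature points `FA` (`i < nA` relevant) and
`FB` (`j < nB` relevant) with token weights `wA`, `wB`: embed each feature point, then apply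
the attention layers in order.  The result is the pair of output token streams.  Taking
`wA = wB ≡ 1` yields the ordinary Transformer `TF`; taking `wA = p_A`, `wB = p_B` yields the
reweighted Transformer `TF^{p_A,p_B}`. -/
def runTF {d : ℕ} (T : MatchingTF d) (nA nB : ℕ) (wA wB : ℕ → ℝ)
    (FA FB : ℕ → (Fin 2 → ℝ) × (Fin d → ℝ)) : (ℕ → Fin d → ℝ) × (ℕ → Fin d → ℝ) :=
  T.layers.foldl (fun X L => applyLayer L nA nB wA wB X)
    (fun i => T.emb (FA i).1 (FA i).2, fun j => T.emb (FB j).1 (FB j).2)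

open scoped Matrix

/-- The encoding of `p_A`, `F_A*`, … as `ℕ`-indexed families expected by `runTF`. -/
def finExtend {α : Type*} [Zero α] {n : ℕ} (v : Fin n → α) : ℕ → α :=
  fun k => if h : k < n then v ⟨k, h⟩ else 0

@[simp]
lemma finExtend_val {α : Type*} [Zero α] {n : ℕ} (v : Fin n → α) (i : Fin n) :
    finExtend v i = v i := by
  simp [finExtend]

lemma finExtend_pos {n : ℕ} {v : Fin n → ℝ} (hv : ∀ i, 0 < v i) {k : ℕ} (hk : k < n) :
    0 < finExtend v k := by
  simpa [finExtend, hk] using hv ⟨k, hk⟩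

lemma continuous_finExtend {α : Type*} [Zero α] [TopologicalSpace α] {n : ℕ} :
    Continuous (finExtend : (Fin n → α) → ℕ → α) := by
  refine continuous_pi fun k => ?_
  by_cases h : k < n
  · simpa [finExtend, h] using continuous_apply (⟨k, h⟩ : Fin n)
  · simpa [finExtend, h] using continuous_const

section Attention

variable {d : ℕ} (L : AttnLayer d)

def attnScore (h : Fin L.H) (w : ℕ → ℝ) (XK : ℕ → Fin d → ℝ) (q : Fin d → ℝ) (i : ℕ) : ℝ :=
  w i * L.delta (L.WK h *ᵥ XK i) (L.WQ h *ᵥ q)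

def attnSublayer (nK : ℕ) (w : ℕ → ℝ) (XK : ℕ → Fin d → ℝ) (q : Fin d → ℝ) : Fin d → ℝ :=
  q + ∑ h : Fin L.H, ∑ i ∈ range nK,
    (attnScore L h w XK q i / ∑ k ∈ range nK, attnScore L h w XK q k) • (L.WVO h *ᵥ XK i)

def feedForward (Y : Fin d → ℝ) : Fin d → ℝ :=
  Y + L.W2 *ᵥ (fun a => L.act ((L.W1 *ᵥ Y + L.b1) a)) + L.b2

lemma attnUpdate_eq_feedForward_attnSublayer (nK : ℕ) (w : ℕ → ℝ) (XK : ℕ → Fin d → ℝ)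
    (q : Fin d → ℝ) : attnUpdate L nK w XK q = feedForward L (attnSublayer L nK w XK q) :=
  rfl

lemma attnSublayer_const_mul (nK : ℕ) {c : ℝ} (hc : c ≠ 0) (w : ℕ → ℝ)
    (XK : ℕ → Fin d → ℝ) (q : Fin d → ℝ) :
    attnSublayer L nK (fun i => c * w i) XK q = attnSublayer L nK w XK q := by
  have hscore : ∀ h, attnScore L h (fun i => c * w i) XK q = fun i => c * attnScore L h w XK q i :=
    fun h => funext fun i => mul_assoc _ _ _
  simp only [attnSublayer, hscore, ← Finset.mul_sum, mul_div_mul_left _ _ hc]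

lemma attnUpdate_const_mul (nK : ℕ) {c : ℝ} (hc : c ≠ 0) (w : ℕ → ℝ)
    (XK : ℕ → Fin d → ℝ) (q : Fin d → ℝ) :
    attnUpdate L nK (fun i => c * w i) XK q = attnUpdate L nK w XK q := by
  simp only [attnUpdate_eq_feedForward_attnSublayer, attnSublayer_const_mul L nK hc]

def pushWeights (n : ℕ) (s : ℕ → ℕ) (w : ℕ → ℝ) (k : ℕ) : ℝ :=
  ∑ i ∈ range n with s i = k, w i

lemma sum_smul_comp_eq_sum_pushWeights_smul {M : Type*} [AddCommMonoid M] [Module ℝ M]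
    {n N : ℕ} {s : ℕ → ℕ} (hs : ∀ i < n, s i < N) (w : ℕ → ℝ) (f : ℕ → M) :
    ∑ i ∈ range n, w i • f (s i) = ∑ k ∈ range N, pushWeights n s w k • f k := by
  rw [← Finset.sum_fiberwise_of_maps_to (g := s) (t := range N)
    (fun i hi => mem_range.2 (hs i (mem_range.1 hi)))]
  refine Finset.sum_congr rfl fun k _ => ?_
  rw [pushWeights, Finset.sum_smul]
  exact Finset.sum_congr rfl fun i hi => by rw [(mem_filter.1 hi).2]

/-- Attention does not see duplicated keys, only the total weight carried by each of them. -/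
lemma attnSublayer_comp {nK N : ℕ} {s : ℕ → ℕ} (hs : ∀ i < nK, s i < N) (w : ℕ → ℝ)
    (XK : ℕ → Fin d → ℝ) (q : Fin d → ℝ) :
    attnSublayer L nK w (XK ∘ s) q = attnSublayer L N (pushWeights nK s w) XK q := by
  have hden : ∀ h, ∑ k ∈ range nK, attnScore L h w (XK ∘ s) q k
      = ∑ k ∈ range N, attnScore L h (pushWeights nK s w) XK q k := fun h =>
    sum_smul_comp_eq_sum_pushWeights_smul hs w fun k => L.delta (L.WK h *ᵥ XK k) (L.WQ h *ᵥ q)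
  simp only [attnSublayer, hden]
  congr 1
  refine Finset.sum_congr rfl fun h _ => ?_
  simpa only [attnScore, mul_div_assoc, smul_smul, Function.comp] using
    sum_smul_comp_eq_sum_pushWeights_smul hs w (fun k => (L.delta (L.WK h *ᵥ XK k) (L.WQ h *ᵥ q)
      / ∑ k ∈ range N, attnScore L h (pushWeights nK s w) XK q k) • (L.WVO h *ᵥ XK k))

lemma attnUpdate_comp {nK N : ℕ} {s : ℕ → ℕ} (hs : ∀ i < nK, s i < N) (w : ℕ → ℝ)
    (XK : ℕ → Fin d → ℝ) (q : Fin d → ℝ) :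
    attnUpdate L nK w (XK ∘ s) q = attnUpdate L N (pushWeights nK s w) XK q := by
  simp only [attnUpdate_eq_feedForward_attnSublayer, attnSublayer_comp L hs]

end Attention

section Transformer

variable {d : ℕ}

lemma applyLayer_const_mul (L : AttnLayer d) (nA nB : ℕ) {c c' : ℝ} (hc : c ≠ 0)
    (hc' : c' ≠ 0) (wA wB : ℕ → ℝ) (X : (ℕ → Fin d → ℝ) × (ℕ → Fin d → ℝ)) :
    applyLayer L nA nB (fun i => c * wA i) (fun j => c' * wB j) X = applyLayer L nA nB wA wB X := by
  unfold applyLayer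
  cases L.srcA <;> cases L.updatesA <;>
    simp only [Bool.false_eq_true, if_true, if_false, attnUpdate_const_mul L _ hc,
      attnUpdate_const_mul L _ hc']

lemma runTF_const_mul (T : MatchingTF d) (nA nB : ℕ) {c c' : ℝ} (hc : c ≠ 0) (hc' : c' ≠ 0)
    (wA wB : ℕ → ℝ) (FA FB : ℕ → (Fin 2 → ℝ) × (Fin d → ℝ)) :
    runTF T nA nB (fun i => c * wA i) (fun j => c' * wB j) FA FB = runTF T nA nB wA wB FA FB := by
  simp only [runTF, applyLayer_const_mul _ nA nB hc hc']

lemma applyLayer_comp (L : AttnLayer d) {nA nB NA NB : ℕ} {s t : ℕ → ℕ}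
    (hs : ∀ i < nA, s i < NA) (ht : ∀ j < nB, t j < NB) (wA wB : ℕ → ℝ)
    (X : (ℕ → Fin d → ℝ) × (ℕ → Fin d → ℝ)) :
    applyLayer L nA nB wA wB (Prod.map (· ∘ s) (· ∘ t) X)
      = Prod.map (· ∘ s) (· ∘ t)
          (applyLayer L NA NB (pushWeights nA s wA) (pushWeights nB t wB) X) := by
  unfold applyLayer
  cases L.srcA <;> cases L.updatesA <;>
    simp only [Bool.false_eq_true, if_true, if_false, Prod.map, attnUpdate_comp L hs,
      attnUpdate_comp L ht] <;> rfl

lemma runTF_comp (T : MatchingTF d) {nA nB NA NB : ℕ} {s t : ℕ → ℕ}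
    (hs : ∀ i < nA, s i < NA) (ht : ∀ j < nB, t j < NB) (wA wB : ℕ → ℝ)
    (FA FB : ℕ → (Fin 2 → ℝ) × (Fin d → ℝ)) :
    runTF T nA nB wA wB (FA ∘ s) (FB ∘ t)
      = Prod.map (· ∘ s) (· ∘ t)
          (runTF T NA NB (pushWeights nA s wA) (pushWeights nB t wB) FA FB) := by
  unfold runTF
  exact List.foldl_hom (Prod.map (· ∘ s) (· ∘ t))
    (g₁ := fun X L => applyLayer L NA NB (pushWeights nA s wA) (pushWeights nB t wB) X)
    (g₂ := fun X L => applyLayer L nA nB wA wB X)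
    (init := (fun i => T.emb (FA i).1 (FA i).2, fun j => T.emb (FB j).1 (FB j).2))
    fun X L => applyLayer_comp L hs ht wA wB X

end Transformer

section Sampling

def empiricalFreq {α : Type*} [DecidableEq α] (n : ℕ) (σ : ℕ → α) (a : α) : ℝ :=
  #{i ∈ range n | σ i = a} / n

lemma pushWeights_one_eq_mul_empiricalFreq {N n : ℕ} (hn : n ≠ 0) (σ : ℕ → Fin N) :
    pushWeights n (fun i => (σ i : ℕ)) (fun _ => 1)
      = fun k => n * finExtend (empiricalFreq n σ) k := by
  funext k
  by_cases hk : k < N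
  · have hfilter : {i ∈ range n | (σ i : ℕ) = k} = {i ∈ range n | σ i = ⟨k, hk⟩} := by
      simp only [Fin.ext_iff]
    simp [pushWeights, finExtend, hk, empiricalFreq, hfilter, mul_div_cancel₀, hn]
  · have hfilter : {i ∈ range n | (σ i : ℕ) = k} = ∅ :=
      filter_false_of_mem fun i _ hi => hk (hi ▸ (σ i).isLt)
    simp [pushWeights, finExtend, hk, hfilter]

def reweightedOutput {d NA NB : ℕ} (T : MatchingTF d) (FA : Fin NA → (Fin 2 → ℝ) × (Fin d → ℝ))
    (FB : Fin NB → (Fin 2 → ℝ) × (Fin d → ℝ)) (w : (Fin NA → ℝ) × (Fin NB → ℝ)) :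
    (Fin NA → Fin d → ℝ) × (Fin NB → Fin d → ℝ) :=
  Prod.map (· ∘ Fin.val) (· ∘ Fin.val)
    (runTF T NA NB (finExtend w.1) (finExtend w.2) (finExtend FA) (finExtend FB))

lemma runTF_sample {d NA NB n m : ℕ} (hn : n ≠ 0) (hm : m ≠ 0) (T : MatchingTF d)
    (FA : Fin NA → (Fin 2 → ℝ) × (Fin d → ℝ)) (FB : Fin NB → (Fin 2 → ℝ) × (Fin d → ℝ))
    (σ : ℕ → Fin NA) (τ : ℕ → Fin NB) :
    runTF T n m (fun _ => 1) (fun _ => 1) (fun k => FA (σ k)) (fun l => FB (τ l))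
      = Prod.map (· ∘ σ) (· ∘ τ)
          (reweightedOutput T FA FB (empiricalFreq n σ, empiricalFreq m τ)) := by
  have hA : (fun k => FA (σ k)) = finExtend FA ∘ fun k => (σ k : ℕ) := by
    funext k; simp
  have hB : (fun l => FB (τ l)) = finExtend FB ∘ fun l => (τ l : ℕ) := by
    funext l; simp
  rw [hA, hB, runTF_comp T (fun i _ => (σ i).isLt) (fun j _ => (τ j).isLt),
    pushWeights_one_eq_mul_empiricalFreq hn, pushWeights_one_eq_mul_empiricalFreq hm,
    runTF_const_mul T _ _ (Nat.cast_ne_zero.2 hn) (Nat.cast_ne_zero.2 hm)]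
  rfl

end Sampling

section Continuity

variable {d : ℕ} {X : Type*} [TopologicalSpace X] {x : X}

lemma continuous_feedForward (L : AttnLayer d) : Continuous (feedForward L) := by
  have := L.act_cont
  unfold feedForward
  fun_prop

lemma continuousAt_attnScore (L : AttnLayer d) (h : Fin L.H) {w : X → ℕ → ℝ}
    {XK : X → ℕ → Fin d → ℝ} {q : X → Fin d → ℝ} (hw : ContinuousAt w x)
    (hXK : ContinuousAt XK x) (hq : ContinuousAt q x) (i : ℕ) :
    ContinuousAt (fun y => attnScore L h (w y) (XK y) (q y) i) x := by
  have hmulVec : ∀ M : Matrix (Fin d) (Fin d) ℝ, Continuous (M *ᵥ ·) := fun M => by fun_prop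
  exact ((continuous_apply i).continuousAt.comp hw).mul <| L.delta_cont.continuousAt.comp
    (((hmulVec _).continuousAt.comp ((continuous_apply i).continuousAt.comp hXK)).prodMk
      ((hmulVec _).continuousAt.comp hq))

lemma continuousAt_attnSublayer (L : AttnLayer d) {nK : ℕ} {w : X → ℕ → ℝ}
    {XK : X → ℕ → Fin d → ℝ} {q : X → Fin d → ℝ} (hw : ContinuousAt w x)
    (hXK : ContinuousAt XK x) (hq : ContinuousAt q x) (hpos : ∀ k < nK, 0 < w x k) :
    ContinuousAt (fun y => attnSublayer L nK (w y) (XK y) (q y)) x := by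
  have hscore := fun h => continuousAt_attnScore L h hw hXK hq
  have hden : ∀ h, ∀ i ∈ range nK, ∑ k ∈ range nK, attnScore L h (w x) (XK x) (q x) k ≠ 0 :=
    fun h i hi => (sum_pos (fun k hk => mul_pos (hpos k (mem_range.1 hk)) (L.delta_pos _ _))
      ⟨i, hi⟩).ne'
  have hvalue : ∀ h i, ContinuousAt (fun y => L.WVO h *ᵥ XK y i) x := fun h i =>
    (show Continuous fun v : ℕ → Fin d → ℝ => L.WVO h *ᵥ v i by fun_prop).continuousAt.comp hXK
  exact hq.add <| tendsto_finsetSum _ fun h _ => tendsto_finsetSum _ fun i hi =>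
    ((hscore h i).div (tendsto_finsetSum _ fun k _ => hscore h k) (hden h i hi)).smul
      (hvalue h i)

lemma continuousAt_applyLayer (L : AttnLayer d) {nA nB : ℕ} {wA wB : X → ℕ → ℝ}
    {Y : X → (ℕ → Fin d → ℝ) × (ℕ → Fin d → ℝ)} (hwA : ContinuousAt wA x)
    (hwB : ContinuousAt wB x) (hposA : ∀ k < nA, 0 < wA x k) (hposB : ∀ k < nB, 0 < wB x k)
    (hY : ContinuousAt Y x) :
    ContinuousAt (fun y => applyLayer L nA nB (wA y) (wB y) (Y y)) x := by
  have hupdate : ∀ {nK : ℕ} {w : X → ℕ → ℝ} {XK Q : X → ℕ → Fin d → ℝ}, ContinuousAt w x →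
      (∀ k < nK, 0 < w x k) → ContinuousAt XK x → ContinuousAt Q x →
      ContinuousAt (fun y j => attnUpdate L nK (w y) (XK y) (Q y j)) x :=
    fun hw hpos hXK hQ => continuousAt_pi.2 fun j => (continuous_feedForward L).continuousAt.comp
      (continuousAt_attnSublayer L hw hXK ((continuous_apply j).continuousAt.comp hQ) hpos)
  unfold applyLayer
  cases L.srcA <;> cases L.updatesA <;> simp only [Bool.false_eq_true, if_true, if_false]
  exacts [hY.fst.prodMk (hupdate hwB hposB hY.snd hY.snd),
    (hupdate hwB hposB hY.snd hY.fst).prodMk hY.snd,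
    hY.fst.prodMk (hupdate hwA hposA hY.fst hY.snd),
    (hupdate hwA hposA hY.fst hY.fst).prodMk hY.snd]

lemma continuousAt_runTF (T : MatchingTF d) {nA nB : ℕ} {wA wB : X → ℕ → ℝ}
    (hwA : ContinuousAt wA x) (hwB : ContinuousAt wB x) (hposA : ∀ k < nA, 0 < wA x k)
    (hposB : ∀ k < nB, 0 < wB x k) (FA FB : ℕ → (Fin 2 → ℝ) × (Fin d → ℝ)) :
    ContinuousAt (fun y => runTF T nA nB (wA y) (wB y) FA FB) x := by
  suffices ∀ (ls : List (AttnLayer d)) {Y : X → (ℕ → Fin d → ℝ) × (ℕ → Fin d → ℝ)},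
      ContinuousAt Y x →
      ContinuousAt (fun y => ls.foldl (fun Z L => applyLayer L nA nB (wA y) (wB y) Z) (Y y)) x
    from this T.layers continuousAt_const
  intro ls
  induction ls with
  | nil => exact id
  | cons L ls ih => exact fun hY => ih (continuousAt_applyLayer L hwA hwB hposA hposB hY)

lemma continuousAt_reweightedOutput {NA NB : ℕ} (T : MatchingTF d)
    (FA : Fin NA → (Fin 2 → ℝ) × (Fin d → ℝ)) (FB : Fin NB → (Fin 2 → ℝ) × (Fin d → ℝ))
    {pA : Fin NA → ℝ} {pB : Fin NB → ℝ} (hpA : ∀ i, 0 < pA i) (hpB : ∀ j, 0 < pB j) :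
    ContinuousAt (reweightedOutput T FA FB) (pA, pB) :=
  (show Continuous (Prod.map (· ∘ Fin.val) (· ∘ Fin.val) :
      (ℕ → Fin d → ℝ) × (ℕ → Fin d → ℝ) → _) by fun_prop).continuousAt.comp <|
    continuousAt_runTF T (continuous_finExtend.comp continuous_fst).continuousAt
      (continuous_finExtend.comp continuous_snd).continuousAt
      (fun _ => finExtend_pos hpA) (fun _ => finExtend_pos hpB) _ _

end Continuity

section Probability

variable {Ω : Type*} [MeasurableSpace Ω] {P : Measure Ω} {κ : Type*} {l : Filter κ}
  {E F : Type*} [PseudoMetricSpace E] [PseudoMetricSpace F]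

lemma dist_apply_fst_le {α β : Type*} [Fintype α] [Fintype β] (x y : (α → E) × (β → F)) (a : α) :
    dist (x.1 a) (y.1 a) ≤ dist x y :=
  (dist_le_pi_dist x.1 y.1 a).trans ((le_max_left _ _).trans_eq Prod.dist_eq.symm)

lemma dist_apply_snd_le {α β : Type*} [Fintype α] [Fintype β] (x y : (α → E) × (β → F)) (b : β) :
    dist (x.2 b) (y.2 b) ≤ dist x y :=
  (dist_le_pi_dist x.2 y.2 b).trans ((le_max_right _ _).trans_eq Prod.dist_eq.symm)

lemma TendstoInProb.of_eventually_dist_le {X : κ → Ω → E} {Y : Ω → E} {X' : κ → Ω → F}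
    {Y' : Ω → F} (h : TendstoInProb P l X Y)
    (hle : ∀ᶠ n in l, ∀ ω, dist (X' n ω) (Y' ω) ≤ dist (X n ω) (Y ω)) :
    TendstoInProb P l X' Y' := fun ε hε =>
  tendsto_of_tendsto_of_tendsto_of_le_of_le' tendsto_const_nhds (h ε hε)
    (Eventually.of_forall fun _ => zero_le)
    (hle.mono fun _ hn => measure_mono fun ω hω => lt_of_lt_of_le hω (hn ω))

lemma MeasureTheory.TendstoInMeasure.tendstoInProb {X : κ → Ω → E} {Y : Ω → E}
    (h : TendstoInMeasure P X l Y) : TendstoInProb P l X Y := fun ε hε =>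
  tendsto_of_tendsto_of_tendsto_of_le_of_le tendsto_const_nhds
    (tendstoInMeasure_iff_dist.1 h ε hε) (fun _ => zero_le)
    fun _ => measure_mono <| Set.ofPred_subset_ofPred.2 fun _ => le_of_lt

lemma TendstoInProb.comp {κ' : Type*} {l' : Filter κ'} {X : κ → Ω → E} {Y : Ω → E}
    (h : TendstoInProb P l X Y) {u : κ' → κ} (hu : Tendsto u l' l) :
    TendstoInProb P l' (fun n => X (u n)) Y := fun ε hε =>
  (h ε hε).comp hu

lemma TendstoInProb.comp_continuousAt {X : κ → Ω → E} {c : E} {f : E → F}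
    (h : TendstoInProb P l X fun _ => c) (hf : ContinuousAt f c) :
    TendstoInProb P l (fun n ω => f (X n ω)) fun _ => f c := by
  intro ε hε
  obtain ⟨δ, hδ, hfδ⟩ := Metric.continuousAt_iff.1 hf ε hε
  refine tendsto_of_tendsto_of_tendsto_of_le_of_le tendsto_const_nhds (h (δ / 2) (half_pos hδ))
    (fun _ => zero_le) fun n => measure_mono fun ω hω => ?_
  by_contra hclose
  exact (hfδ ((not_lt.1 hclose).trans_lt (half_lt_self hδ))).not_gt hω

lemma TendstoInProb.prodMk {X : κ → Ω → E} {Y : Ω → E} {X' : κ → Ω → F} {Y' : Ω → F}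
    (h : TendstoInProb P l X Y) (h' : TendstoInProb P l X' Y') :
    TendstoInProb P l (fun n ω => (X n ω, X' n ω)) fun ω => (Y ω, Y' ω) := by
  intro ε hε
  refine tendsto_of_tendsto_of_tendsto_of_le_of_le tendsto_const_nhds
    (by simpa using (h ε hε).add (h' ε hε)) (fun _ => zero_le) fun n => ?_
  refine (measure_mono fun ω hω => ?_).trans (measure_union_le _ _)
  simpa [Prod.dist_eq] using hω

lemma TendstoInProb.pi {ι : Type*} [Fintype ι] {E : ι → Type*} [∀ i, PseudoMetricSpace (E i)]
    {X : κ → Ω → ∀ i, E i} {Y : Ω → ∀ i, E i}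
    (h : ∀ i, TendstoInProb P l (fun n ω => X n ω i) fun ω => Y ω i) :
    TendstoInProb P l X Y := by
  intro ε hε
  refine tendsto_of_tendsto_of_tendsto_of_le_of_le tendsto_const_nhds
    (by simpa using tendsto_finsetSum univ fun i _ => h i ε hε) (fun _ => zero_le) fun n => ?_
  refine (measure_mono fun ω hω => ?_).trans (measure_iUnion_fintype_le _ _)
  have hfar : ¬ dist (X n ω) (Y ω) ≤ ε := not_le.2 hω
  simpa [dist_pi_le_iff hε.le] using hfar

lemma tendstoInProb_empiricalFreq [IsProbabilityMeasure P] {α : Type*} [MeasurableSpace α]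
    [MeasurableSingletonClass α] [DecidableEq α] {ι : ℕ → Ω → α}
    (hmeas : ∀ k, Measurable (ι k)) (hindep : iIndepFun ι P)
    (hident : ∀ k, IdentDistrib (ι k) (ι 0) P P) (a : α) :
    TendstoInProb P atTop (fun n ω => empiricalFreq n (ι · ω) a)
      fun _ => P.real {ω | ι 0 ω = a} := by
  set g : α → ℝ := fun b => if b = a then 1 else 0
  have hg : Measurable g := Measurable.ite measurableSet_eq measurable_const measurable_const
  set X : ℕ → Ω → ℝ := fun k => g ∘ ι k
  have hX : ∀ k, X k = (ι k ⁻¹' {a}).indicator 1 := fun k => by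
    funext ω
    by_cases h : ι k ω = a <;> simp [X, g, h]
  have hmean : P[X 0] = P.real {ω | ι 0 ω = a} := by
    rw [hX 0]
    exact integral_indicator_one (hmeas 0 (measurableSet_singleton a))
  have hlim := strong_law_ae_real X
    (by rw [hX 0]; exact (integrable_const 1).indicator (hmeas 0 (measurableSet_singleton a)))
    (fun i j hij => (hindep.comp _ fun _ => hg).indepFun hij) (fun k => (hident k).comp hg)
  rw [hmean] at hlim
  have hfreq : ∀ n ω, (∑ i ∈ range n, X i ω) / n = empiricalFreq n (ι · ω) a := fun n ω => by
    simp [X, g, empiricalFreq, Finset.sum_boole]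
  simp only [hfreq] at hlim
  refine (tendstoInMeasure_of_tendsto_ae (fun n => ?_) hlim).tendstoInProb
  simp only [← hfreq]
  exact ((Finset.measurable_sum _ fun i _ => hg.comp (hmeas i)).div_const _).aestronglyMeasurable

lemma tendstoInProb_empiricalFreq_of_law [IsProbabilityMeasure P] {α : Type*} [Fintype α]
    [MeasurableSpace α] [MeasurableSingletonClass α] [DecidableEq α] {p : α → ℝ}
    (hp : ∀ a, 0 ≤ p a) {ι : ℕ → Ω → α} (hmeas : ∀ k, Measurable (ι k))
    (hlaw : ∀ k a, P {ω | ι k ω = a} = ENNReal.ofReal (p a)) (hindep : iIndepFun ι P) :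
    TendstoInProb P atTop (fun n ω => empiricalFreq n (ι · ω)) fun _ => p := by
  have hident : ∀ k, IdentDistrib (ι k) (ι 0) P P := fun k =>
    ⟨(hmeas k).aemeasurable, (hmeas 0).aemeasurable, Measure.ext_of_singleton fun a => by
      rw [Measure.map_apply (hmeas k) (measurableSet_singleton a),
        Measure.map_apply (hmeas 0) (measurableSet_singleton a)]
      exact (hlaw k a).trans (hlaw 0 a).symm⟩
  refine TendstoInProb.pi fun a => ?_
  simpa [measureReal_def, hlaw, hp a] using tendstoInProb_empiricalFreq hmeas hindep hident a

end Probability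

theorem reweighted_transformer_asymptotic_general
    {Ω : Type*} [MeasurableSpace Ω] (P : Measure Ω) [IsProbabilityMeasure P]
    (d nAs nBs : ℕ)
    (FAstar : Fin nAs → (Fin 2 → ℝ) × (Fin d → ℝ))
    (FBstar : Fin nBs → (Fin 2 → ℝ) × (Fin d → ℝ))
    (pA : Fin nAs → ℝ) (pB : Fin nBs → ℝ)
    (hpA_pos : ∀ i, 0 < pA i)
    (hpB_pos : ∀ j, 0 < pB j)
    (ι : ℕ → Ω → Fin nAs) (κ : ℕ → Ω → Fin nBs)
    (hι_meas : ∀ k, Measurable (ι k)) (hκ_meas : ∀ l, Measurable (κ l))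
    -- each `ι k` has law `pA`, each `κ l` has law `pB`
    (hι_law : ∀ k i, P {ω | ι k ω = i} = ENNReal.ofReal (pA i))
    (hκ_law : ∀ l j, P {ω | κ l ω = j} = ENNReal.ofReal (pB j))
    -- each sequence is independent
    (hι_indep : iIndepFun ι P)
    (hκ_indep : iIndepFun κ P)
    (T : MatchingTF d) :
    (∀ i : ℕ,
      TendstoInProb P (atTop : Filter (ℕ × ℕ))
        (fun nAB ω =>
          ((FAstar (ι i ω)).1,
            (runTF T nAB.1 nAB.2 (fun _ => (1 : ℝ)) (fun _ => (1 : ℝ))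
              (fun k => FAstar (ι k ω)) (fun l => FBstar (κ l ω))).1 i))
        (fun ω =>
          ((FAstar (ι i ω)).1,
            (runTF T nAs nBs
              (fun k => if h : k < nAs then pA ⟨k, h⟩ else 0)
              (fun l => if h : l < nBs then pB ⟨l, h⟩ else 0)
              (fun k => if h : k < nAs then FAstar ⟨k, h⟩ else 0)
              (fun l => if h : l < nBs then FBstar ⟨l, h⟩ else 0)).1 (ι i ω).val))) ∧
    (∀ j : ℕ,
      TendstoInProb P (atTop : Filter (ℕ × ℕ))
        (fun nAB ω =>
          ((FBstar (κ j ω)).1,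
            (runTF T nAB.1 nAB.2 (fun _ => (1 : ℝ)) (fun _ => (1 : ℝ))
              (fun k => FAstar (ι k ω)) (fun l => FBstar (κ l ω))).2 j))
        (fun ω =>
          ((FBstar (κ j ω)).1,
            (runTF T nAs nBs
              (fun k => if h : k < nAs then pA ⟨k, h⟩ else 0)
              (fun l => if h : l < nBs then pB ⟨l, h⟩ else 0)
              (fun k => if h : k < nAs then FAstar ⟨k, h⟩ else 0)
              (fun l => if h : l < nBs then FBstar ⟨l, h⟩ else 0)).2 (κ j ω).val))) := by
  have hfreq : TendstoInProb P atTop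
      (fun n : ℕ × ℕ => fun ω => (empiricalFreq n.1 (ι · ω), empiricalFreq n.2 (κ · ω)))
      fun _ => (pA, pB) :=
    ((tendstoInProb_empiricalFreq_of_law (fun a => (hpA_pos a).le) hι_meas hι_law hι_indep).comp
      (tendsto_fst.mono_left prod_atTop_atTop_eq.ge)).prodMk
    ((tendstoInProb_empiricalFreq_of_law (fun b => (hpB_pos b).le) hκ_meas hκ_law hκ_indep).comp
      (tendsto_snd.mono_left prod_atTop_atTop_eq.ge))
  have hout :=
    hfreq.comp_continuousAt (continuousAt_reweightedOutput T FAstar FBstar hpA_pos hpB_pos)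
  have hsample : ∀ᶠ n : ℕ × ℕ in atTop, ∀ ω,
      runTF T n.1 n.2 (fun _ => 1) (fun _ => 1) (fun k => FAstar (ι k ω)) (fun l => FBstar (κ l ω))
        = Prod.map (· ∘ (ι · ω)) (· ∘ (κ · ω)) (reweightedOutput T FAstar FBstar
            (empiricalFreq n.1 (ι · ω), empiricalFreq n.2 (κ · ω))) :=
    (eventually_ge_atTop (1, 1)).mono fun n hn ω =>
      runTF_sample (Nat.one_le_iff_ne_zero.1 hn.1) (Nat.one_le_iff_ne_zero.1 hn.2) T FAstar FBstar
        _ _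
  refine ⟨fun i => hout.of_eventually_dist_le (hsample.mono fun n hn ω => ?_),
    fun j => hout.of_eventually_dist_le (hsample.mono fun n hn ω => ?_)⟩
  · rw [hn ω, dist_prod_same_left]
    exact dist_apply_fst_le (reweightedOutput T FAstar FBstar _)
      (reweightedOutput T FAstar FBstar (pA, pB)) (ι i ω)
  · rw [hn ω, dist_prod_same_left]
    exact dist_apply_snd_le (reweightedOutput T FAstar FBstar _)
      (reweightedOutput T FAstar FBstar (pA, pB)) (κ j ω)

/-- asymptotic equivalence of a matching Transformer on i.i.d. sampled feature
points and its reweighted version on all feature points.  Samples `k ∈ {1,…,n_A}` are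
modelled as `k ∈ Finset.range n_A` (0-based), with `F_{A,k} = FAstar (ι k)` and
`F_{B,l} = FBstar (κ l)`.  Output feature points keep the input coordinates and replace
descriptors by the final tokens; convergence is stated for the (coordinate, descriptor)
pairs. -/
theorem reweighted_transformer_asymptotic
    {Ω : Type*} [MeasurableSpace Ω] (P : Measure Ω) [IsProbabilityMeasure P]
    (d nAs nBs : ℕ) (hd : 0 < d) (hnAs : 0 < nAs) (hnBs : 0 < nBs)
    (FAstar : Fin nAs → (Fin 2 → ℝ) × (Fin d → ℝ))
    (FBstar : Fin nBs → (Fin 2 → ℝ) × (Fin d → ℝ))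
    (pA : Fin nAs → ℝ) (pB : Fin nBs → ℝ)
    (hpA_pos : ∀ i, 0 < pA i) (hpA_sum : ∑ i, pA i = 1)
    (hpB_pos : ∀ j, 0 < pB j) (hpB_sum : ∑ j, pB j = 1)
    (ι : ℕ → Ω → Fin nAs) (κ : ℕ → Ω → Fin nBs)
    (hι_meas : ∀ k, Measurable (ι k)) (hκ_meas : ∀ l, Measurable (κ l))
    -- each `ι k` has law `pA`, each `κ l` has law `pB`
    (hι_law : ∀ k i, P {ω | ι k ω = i} = ENNReal.ofReal (pA i))
    (hκ_law : ∀ l j, P {ω | κ l ω = j} = ENNReal.ofReal (pB j))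
    -- each sequence is independent, and the two sequences are independent of each other
    (hι_indep : iIndepFun ι P)
    (hκ_indep : iIndepFun κ P)
    (h_cross : IndepFun (fun ω k => ι k ω) (fun ω l => κ l ω) P)
    (T : MatchingTF d) :
    (∀ i : ℕ,
      TendstoInProb P (atTop : Filter (ℕ × ℕ))
        (fun nAB ω =>
          ((FAstar (ι i ω)).1,
            (runTF T nAB.1 nAB.2 (fun _ => (1 : ℝ)) (fun _ => (1 : ℝ))
              (fun k => FAstar (ι k ω)) (fun l => FBstar (κ l ω))).1 i))
        (fun ω =>
          ((FAstar (ι i ω)).1,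
            (runTF T nAs nBs
              (fun k => if h : k < nAs then pA ⟨k, h⟩ else 0)
              (fun l => if h : l < nBs then pB ⟨l, h⟩ else 0)
              (fun k => if h : k < nAs then FAstar ⟨k, h⟩ else 0)
              (fun l => if h : l < nBs then FBstar ⟨l, h⟩ else 0)).1 (ι i ω).val))) ∧
    (∀ j : ℕ,
      TendstoInProb P (atTop : Filter (ℕ × ℕ))
        (fun nAB ω =>
          ((FBstar (κ j ω)).1,
            (runTF T nAB.1 nAB.2 (fun _ => (1 : ℝ)) (fun _ => (1 : ℝ))
              (fun k => FAstar (ι k ω)) (fun l => FBstar (κ l ω))).2 j))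
        (fun ω =>
          ((FBstar (κ j ω)).1,
            (runTF T nAs nBs
              (fun k => if h : k < nAs then pA ⟨k, h⟩ else 0)
              (fun l => if h : l < nBs then pB ⟨l, h⟩ else 0)
              (fun k => if h : k < nAs then FAstar ⟨k, h⟩ else 0)
              (fun l => if h : l < nBs then FBstar ⟨l, h⟩ else 0)).2 (κ j ω).val))) :=
  reweighted_transformer_asymptotic_general P d nAs nBs FAstar FBstar pA pB hpA_pos hpB_pos ι κ
    hι_meas hκ_meas hι_law hκ_law hι_indep hκ_indep T

end
end
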